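/- Let X := { (x₁,x₂) ∈ ℝ² : x₁ = 0 or x₂ = 0 } with the Euclidean metric and let μ be the restriction to X of the 1-dimensional Hausdorff measure. Define u : X → ℝ by u := χ_{{x₁ > 0}} + 2χ_{{x₂ > 0}} + 3χ_{{x₁ < 0}} + 4χ_{{x₂ < 0}}. Then, writing 0 for the origin, for each v ∈ {1,2,3,4} one has lim_{r→0⁺} μ(B(0,r) ∩ {u = v})/μ(B(0,r)) = 1/4; consequently u^∧(0) = 1 and u^∨(0) = 4. -/

import Mathlib

open MeasureTheory Metric Filter Set Topology
open scoped ENNReal NNReal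

/-- The union of the two coordinate axes in the Euclidean plane. -/
def coordAxes : Set (EuclideanSpace ℝ (Fin 2)) := {p | p 0 = 0 ∨ p 1 = 0}

/-- The restriction to the coordinate axes of the 1-dimensional Hausdorff measure. -/
noncomputable def axesMeasure : Measure (EuclideanSpace ℝ (Fin 2)) :=
  (Measure.hausdorffMeasure 1).restrict coordAxes

/-- The function `u = χ_{x₁>0} + 2χ_{x₂>0} + 3χ_{x₁<0} + 4χ_{x₂<0}` of Example 5.1. -/
noncomputable def uAxes : EuclideanSpace ℝ (Fin 2) → ℝ := fun p =>
  (if 0 < p 0 then (1 : ℝ) else 0) + (if 0 < p 1 then (2 : ℝ) else 0) +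
  (if p 0 < 0 then (3 : ℝ) else 0) + (if p 1 < 0 then (4 : ℝ) else 0)

/-- The upper approximate limit `u^∨(x)` of `u` at `x`, with respect to the measure `μ`. -/
noncomputable def upperApproxLimit (μ : Measure (EuclideanSpace ℝ (Fin 2)))
    (u : EuclideanSpace ℝ (Fin 2) → ℝ) (x : EuclideanSpace ℝ (Fin 2)) : EReal :=
  sInf {t : EReal |
    Tendsto (fun r : ℝ => μ (ball x r ∩ {y | t < (u y : EReal)}) / μ (ball x r))
      (𝓝[>] (0 : ℝ)) (𝓝 0)}

/-- The lower approximate limit `u^∧(x)` of `u` at `x`, with respect to the measure `μ`. -/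
noncomputable def lowerApproxLimit (μ : Measure (EuclideanSpace ℝ (Fin 2)))
    (u : EuclideanSpace ℝ (Fin 2) → ℝ) (x : EuclideanSpace ℝ (Fin 2)) : EReal :=
  sSup {t : EReal |
    Tendsto (fun r : ℝ => μ (ball x r ∩ {y | (u y : EReal) < t}) / μ (ball x r))
      (𝓝[>] (0 : ℝ)) (𝓝 0)}

/- ### Auxiliary lemmas -/

local notation "E2" => EuclideanSpace ℝ (Fin 2)

private lemma isometry_single (i : Fin 2) :
    Isometry (fun t : ℝ => EuclideanSpace.single i t) :=
  Isometry.of_dist_eq fun a b => EuclideanSpace.dist_single_same i a b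

private lemma h1_image (i : Fin 2) (s : Set ℝ) :
    Measure.hausdorffMeasure 1 ((fun t : ℝ => EuclideanSpace.single i t) '' s) = volume s := by
  rw [(isometry_single i).hausdorffMeasure_image (Or.inl zero_le_one),
    MeasureTheory.hausdorffMeasure_real]

private lemma image_single_eq (i : Fin 2) (s : Set ℝ) :
    (fun t : ℝ => EuclideanSpace.single i t) '' s
      = {p : E2 | p i ∈ s ∧ ∀ j, j ≠ i → p j = 0} := by
  ext p
  constructor
  · rintro ⟨t, ht, rfl⟩
    refine ⟨by simpa [EuclideanSpace.single_apply] using ht, fun j hj => ?_⟩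
    simp [EuclideanSpace.single_apply, hj]
  · rintro ⟨h1, h2⟩
    refine ⟨p i, h1, ?_⟩
    ext j
    by_cases hj : j = i
    · subst hj; simp [EuclideanSpace.single_apply]
    · simp [EuclideanSpace.single_apply, hj, h2 j hj]

private lemma measurable_image_single (i : Fin 2) {s : Set ℝ} (hs : MeasurableSet s) :
    MeasurableSet ((fun t : ℝ => EuclideanSpace.single i t) '' s) := by
  rw [image_single_eq]
  have hcont : ∀ j : Fin 2, Continuous (fun p : E2 => p j) := fun j =>
    (EuclideanSpace.proj j).continuous
  have heq : {p : E2 | p i ∈ s ∧ ∀ j, j ≠ i → p j = 0}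
      = (fun p : E2 => p i) ⁻¹' s ∩ ⋂ j ∈ ({j | j ≠ i} : Set (Fin 2)), {p : E2 | p j = 0} := by
    ext p; simp [Set.mem_iInter]
  rw [heq]
  exact ((hcont i).measurable hs).inter <|
    MeasurableSet.biInter (Set.to_countable _) fun j _ =>
      (hcont j).measurable (measurableSet_singleton 0)

private lemma coordAxes_meas : MeasurableSet coordAxes := by
  have hcont : ∀ j : Fin 2, Continuous (fun p : E2 => p j) := fun j =>
    (EuclideanSpace.proj j).continuous
  exact ((hcont 0).measurable (measurableSet_singleton 0)).union
    ((hcont 1).measurable (measurableSet_singleton 0))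

private lemma eq_single0 {p : E2} (h : p 1 = 0) : p = EuclideanSpace.single 0 (p 0) := by
  ext j
  fin_cases j <;> simp [EuclideanSpace.single_apply, h]

private lemma eq_single1 {p : E2} (h : p 0 = 0) : p = EuclideanSpace.single 1 (p 1) := by
  ext j
  fin_cases j <;> simp [EuclideanSpace.single_apply, h]

private lemma norm_single' (i : Fin 2) (t : ℝ) : ‖EuclideanSpace.single i t‖ = |t| := by
  rw [EuclideanSpace.norm_single]; exact Real.norm_eq_abs t

private lemma uAxes_single0 (t : ℝ) :
    uAxes (EuclideanSpace.single 0 t) = if 0 < t then 1 else if t < 0 then 3 else 0 := by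
  simp only [uAxes, EuclideanSpace.single_apply]
  norm_num
  split_ifs <;> linarith

private lemma uAxes_single1 (t : ℝ) :
    uAxes (EuclideanSpace.single 1 t) = if 0 < t then 2 else if t < 0 then 4 else 0 := by
  simp only [uAxes, EuclideanSpace.single_apply]
  norm_num
  split_ifs <;> linarith

private lemma uAxes_le_four {p : E2} (hp : p ∈ coordAxes) : uAxes p ≤ 4 := by
  rcases hp with h | h
  · rw [eq_single1 h, uAxes_single1]; split_ifs <;> norm_num
  · rw [eq_single0 h, uAxes_single0]; split_ifs <;> norm_num

private lemma uAxes_lt_one {p : E2} (hp : p ∈ coordAxes) (h : uAxes p < 1) : p = 0 := by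
  rcases hp with h0 | h0
  · rw [eq_single1 h0, uAxes_single1] at h
    split_ifs at h with h1 h2 <;> try norm_num at h
    rw [eq_single1 h0]
    have : p 1 = 0 := le_antisymm (not_lt.mp h1) (not_lt.mp h2)
    rw [this]; ext j; simp [EuclideanSpace.single_apply]
  · rw [eq_single0 h0, uAxes_single0] at h
    split_ifs at h with h1 h2 <;> try norm_num at h
    rw [eq_single0 h0]
    have : p 0 = 0 := le_antisymm (not_lt.mp h1) (not_lt.mp h2)
    rw [this]; ext j; simp [EuclideanSpace.single_apply]

/-- The measure of a ball centered at the origin. -/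
private lemma axesMeasure_ball {r : ℝ} (hr : 0 < r) :
    axesMeasure (ball (0 : E2) r) = 4 * ENNReal.ofReal r := by
  have hdecomp : ball (0 : E2) r ∩ coordAxes
      = (fun t : ℝ => EuclideanSpace.single 0 t) '' (Ioo (-r) 0 ∪ Ioo 0 r)
        ∪ (fun t : ℝ => EuclideanSpace.single 1 t) '' (Ioo (-r) r) := by
    ext p
    constructor
    · rintro ⟨hb, hax⟩
      have hnorm := mem_ball_zero_iff.mp hb
      by_cases h0 : p 0 = 0
      · right
        refine ⟨p 1, ?_, (eq_single1 h0).symm⟩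
        rw [eq_single1 h0, norm_single'] at hnorm
        exact abs_lt.mp hnorm
      · left
        rcases hax with h | h
        · exact absurd h h0
        rw [eq_single0 h, norm_single'] at hnorm
        refine ⟨p 0, ?_, (eq_single0 h).symm⟩
        rcases lt_trichotomy (p 0) 0 with hlt | heq | hgt
        · exact Or.inl ⟨(abs_lt.mp hnorm).1, hlt⟩
        · exact absurd heq h0
        · exact Or.inr ⟨hgt, (abs_lt.mp hnorm).2⟩
    · rintro (⟨t, ht, rfl⟩ | ⟨t, ht, rfl⟩)
      · have habs : |t| < r := by
          rcases ht with ⟨h1, h2⟩ | ⟨h1, h2⟩ <;> rw [abs_lt] <;> constructor <;> linarith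
        exact ⟨mem_ball_zero_iff.mpr (by rwa [norm_single']), Or.inr (by
          simp [EuclideanSpace.single_apply])⟩
      · have habs : |t| < r := abs_lt.mpr ht
        exact ⟨mem_ball_zero_iff.mpr (by rwa [norm_single']), Or.inl (by
          simp [EuclideanSpace.single_apply])⟩
  have hdisj : Disjoint ((fun t : ℝ => EuclideanSpace.single (0 : Fin 2) t) '' (Ioo (-r) 0 ∪ Ioo 0 r))
      ((fun t : ℝ => EuclideanSpace.single (1 : Fin 2) t) '' (Ioo (-r) r)) := by
    rw [Set.disjoint_left]
    intro p hp1 hp2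
    rw [image_single_eq] at hp1 hp2
    have h00 : p 0 = 0 := hp2.2 0 (by decide)
    rcases hp1.1 with h | h
    · rw [h00] at h; exact absurd h.2 (lt_irrefl 0)
    · rw [h00] at h; exact absurd h.1 (lt_irrefl 0)
  have hIoo : Disjoint (Ioo (-r) (0:ℝ)) (Ioo 0 r) := by
    rw [Set.disjoint_left]; rintro t ⟨_, h1⟩ ⟨h2, _⟩; linarith
  rw [axesMeasure, Measure.restrict_apply' coordAxes_meas, hdecomp,
    measure_union hdisj (measurable_image_single 1 measurableSet_Ioo),
    h1_image, h1_image, measure_union hIoo measurableSet_Ioo,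
    Real.volume_Ioo, Real.volume_Ioo, Real.volume_Ioo]
  rw [show (0:ℝ) - (-r) = r by ring, show r - (0:ℝ) = r by ring,
    show r - (-r) = 2 * r by ring, ENNReal.ofReal_mul (by norm_num : (0:ℝ) ≤ 2)]
  rw [show ENNReal.ofReal (2:ℝ) = 2 by norm_num]
  ring

/-- The value sets intersected with the axes and the ball. -/
private lemma set_v1 (r : ℝ) :
    (ball (0 : E2) r ∩ {p | uAxes p = 1}) ∩ coordAxes
      = (fun t : ℝ => EuclideanSpace.single 0 t) '' Ioo 0 r := by
  ext p
  constructor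
  · rintro ⟨⟨hb, hu⟩, hax⟩
    rw [mem_setOf_eq] at hu
    have hnorm := mem_ball_zero_iff.mp hb
    rcases hax with h0 | h0
    · exfalso
      rw [eq_single1 h0, uAxes_single1] at hu
      split_ifs at hu <;> norm_num at hu
    · rw [eq_single0 h0, uAxes_single0] at hu
      split_ifs at hu with h1 h2 <;> try norm_num at hu
      rw [eq_single0 h0, norm_single'] at hnorm
      exact ⟨p 0, ⟨h1, (abs_lt.mp hnorm).2⟩, (eq_single0 h0).symm⟩
  · rintro ⟨t, ⟨h1, h2⟩, rfl⟩
    refine ⟨⟨mem_ball_zero_iff.mpr ?_, ?_⟩, Or.inr (by simp [EuclideanSpace.single_apply])⟩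
    · rw [norm_single']; rw [abs_lt]; exact ⟨by linarith, h2⟩
    · rw [mem_setOf_eq, uAxes_single0, if_pos h1]

private lemma set_v2 (r : ℝ) :
    (ball (0 : E2) r ∩ {p | uAxes p = 2}) ∩ coordAxes
      = (fun t : ℝ => EuclideanSpace.single 1 t) '' Ioo 0 r := by
  ext p
  constructor
  · rintro ⟨⟨hb, hu⟩, hax⟩
    rw [mem_setOf_eq] at hu
    have hnorm := mem_ball_zero_iff.mp hb
    rcases hax with h0 | h0
    · rw [eq_single1 h0, uAxes_single1] at hu
      split_ifs at hu with h1 h2 <;> try norm_num at hu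
      rw [eq_single1 h0, norm_single'] at hnorm
      exact ⟨p 1, ⟨h1, (abs_lt.mp hnorm).2⟩, (eq_single1 h0).symm⟩
    · exfalso
      rw [eq_single0 h0, uAxes_single0] at hu
      split_ifs at hu <;> norm_num at hu
  · rintro ⟨t, ⟨h1, h2⟩, rfl⟩
    refine ⟨⟨mem_ball_zero_iff.mpr ?_, ?_⟩, Or.inl (by simp [EuclideanSpace.single_apply])⟩
    · rw [norm_single']; rw [abs_lt]; exact ⟨by linarith, h2⟩
    · rw [mem_setOf_eq, uAxes_single1, if_pos h1]

private lemma set_v3 (r : ℝ) :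
    (ball (0 : E2) r ∩ {p | uAxes p = 3}) ∩ coordAxes
      = (fun t : ℝ => EuclideanSpace.single 0 t) '' Ioo (-r) 0 := by
  ext p
  constructor
  · rintro ⟨⟨hb, hu⟩, hax⟩
    rw [mem_setOf_eq] at hu
    have hnorm := mem_ball_zero_iff.mp hb
    rcases hax with h0 | h0
    · exfalso
      rw [eq_single1 h0, uAxes_single1] at hu
      split_ifs at hu <;> norm_num at hu
    · rw [eq_single0 h0, uAxes_single0] at hu
      split_ifs at hu with h1 h2 <;> try norm_num at hu
      rw [eq_single0 h0, norm_single'] at hnorm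
      exact ⟨p 0, ⟨(abs_lt.mp hnorm).1, h2⟩, (eq_single0 h0).symm⟩
  · rintro ⟨t, ⟨h1, h2⟩, rfl⟩
    refine ⟨⟨mem_ball_zero_iff.mpr ?_, ?_⟩, Or.inr (by simp [EuclideanSpace.single_apply])⟩
    · rw [norm_single']; rw [abs_lt]; exact ⟨h1, by linarith⟩
    · rw [mem_setOf_eq, uAxes_single0, if_neg (by linarith), if_pos h2]

private lemma set_v4 (r : ℝ) :
    (ball (0 : E2) r ∩ {p | uAxes p = 4}) ∩ coordAxes
      = (fun t : ℝ => EuclideanSpace.single 1 t) '' Ioo (-r) 0 := by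
  ext p
  constructor
  · rintro ⟨⟨hb, hu⟩, hax⟩
    rw [mem_setOf_eq] at hu
    have hnorm := mem_ball_zero_iff.mp hb
    rcases hax with h0 | h0
    · rw [eq_single1 h0, uAxes_single1] at hu
      split_ifs at hu with h1 h2 <;> try norm_num at hu
      rw [eq_single1 h0, norm_single'] at hnorm
      exact ⟨p 1, ⟨(abs_lt.mp hnorm).1, h2⟩, (eq_single1 h0).symm⟩
    · exfalso
      rw [eq_single0 h0, uAxes_single0] at hu
      split_ifs at hu <;> norm_num at hu
  · rintro ⟨t, ⟨h1, h2⟩, rfl⟩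
    refine ⟨⟨mem_ball_zero_iff.mpr ?_, ?_⟩, Or.inl (by simp [EuclideanSpace.single_apply])⟩
    · rw [norm_single']; rw [abs_lt]; exact ⟨h1, by linarith⟩
    · rw [mem_setOf_eq, uAxes_single1, if_neg (by linarith), if_pos h2]

private lemma meas_val {r : ℝ} {v : ℝ} (hv : v ∈ ({1, 2, 3, 4} : Set ℝ)) :
    axesMeasure (ball (0 : E2) r ∩ {p | uAxes p = v}) = ENNReal.ofReal r := by
  rw [axesMeasure, Measure.restrict_apply' coordAxes_meas]
  simp only [mem_insert_iff, mem_singleton_iff] at hv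
  rcases hv with rfl | rfl | rfl | rfl
  · rw [set_v1, h1_image, Real.volume_Ioo, sub_zero]
  · rw [set_v2, h1_image, Real.volume_Ioo, sub_zero]
  · rw [set_v3, h1_image, Real.volume_Ioo, zero_sub, neg_neg]
  · rw [set_v4, h1_image, Real.volume_Ioo, zero_sub, neg_neg]

private lemma quarter_div {r : ℝ} (hr : 0 < r) :
    ENNReal.ofReal r / (4 * ENNReal.ofReal r) = 1 / 4 := by
  have h0 : ENNReal.ofReal r ≠ 0 := by
    simp [ENNReal.ofReal_eq_zero, not_le, hr]
  have ht : ENNReal.ofReal r ≠ ⊤ := ENNReal.ofReal_ne_top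
  calc ENNReal.ofReal r / (4 * ENNReal.ofReal r)
      = 1 * ENNReal.ofReal r / (4 * ENNReal.ofReal r) := by rw [one_mul]
    _ = 1 / 4 := ENNReal.mul_div_mul_right 1 4 h0 ht

private lemma not_tendsto_of_quarter {f : ℝ → ℝ≥0∞}
    (hf : ∀ r ∈ Ioi (0:ℝ), 1 / 4 ≤ f r) :
    ¬ Tendsto f (𝓝[>] (0 : ℝ)) (𝓝 0) := by
  intro hT
  have h14 : (1 / 4 : ℝ≥0∞) ≤ 0 :=
    ge_of_tendsto hT (Filter.eventually_of_mem self_mem_nhdsWithin hf)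
  simp [ENNReal.div_eq_zero_iff] at h14

/-- Example 5.1 of the paper: at the origin, each of the four values
`1, 2, 3, 4` of `u` has density exactly `1/4`; consequently `u^∧(0) = 1` and `u^∨(0) = 4`. -/
theorem uAxes_four_jump_values :
    (∀ v ∈ ({1, 2, 3, 4} : Set ℝ),
      Tendsto
        (fun r : ℝ =>
          axesMeasure (ball (0 : EuclideanSpace ℝ (Fin 2)) r ∩ {p | uAxes p = v}) /
            axesMeasure (ball (0 : EuclideanSpace ℝ (Fin 2)) r))
        (𝓝[>] (0 : ℝ)) (𝓝 (1 / 4))) ∧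
    lowerApproxLimit axesMeasure uAxes 0 = (1 : EReal) ∧
    upperApproxLimit axesMeasure uAxes 0 = (4 : EReal) := by
  refine ⟨?_, ?_, ?_⟩
  · -- the four densities
    intro v hv
    apply Tendsto.congr' (f₁ := fun _ : ℝ => (1 / 4 : ℝ≥0∞))
    · filter_upwards [self_mem_nhdsWithin] with r hr
      rw [meas_val hv, axesMeasure_ball hr, quarter_div hr]
    · exact tendsto_const_nhds
  · -- lower approximate limit
    have hset : {t : EReal |
        Tendsto (fun r : ℝ =>
          axesMeasure (ball (0:E2) r ∩ {y | (uAxes y : EReal) < t}) /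
            axesMeasure (ball (0:E2) r)) (𝓝[>] (0 : ℝ)) (𝓝 0)}
        = Iic (1 : EReal) := by
      ext t
      simp only [mem_setOf_eq, mem_Iic]
      constructor
      · intro hT
        by_contra hlt
        rw [not_le] at hlt
        refine not_tendsto_of_quarter (fun r hr => ?_) hT
        rw [mem_Ioi] at hr
        have hsub : (fun s : ℝ => EuclideanSpace.single 0 s) '' Ioo 0 r
            ⊆ (ball (0:E2) r ∩ {y | (uAxes y : EReal) < t}) ∩ coordAxes := by
          rintro p ⟨s, ⟨hs1, hs2⟩, rfl⟩
          have hb : EuclideanSpace.single (0 : Fin 2) s ∈ ball (0:E2) r := by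
            rw [mem_ball_zero_iff, norm_single', abs_lt]
            exact ⟨by linarith, hs2⟩
          refine ⟨⟨hb, ?_⟩, Or.inr (by simp [EuclideanSpace.single_apply])⟩
          rw [mem_setOf_eq, uAxes_single0, if_pos hs1]
          calc ((1:ℝ) : EReal) = (1 : EReal) := by norm_cast
            _ < t := hlt
        have hlow : ENNReal.ofReal r
            ≤ axesMeasure (ball (0:E2) r ∩ {y | (uAxes y : EReal) < t}) := by
          rw [axesMeasure, Measure.restrict_apply' coordAxes_meas]
          calc ENNReal.ofReal r
              = Measure.hausdorffMeasure 1
                  ((fun s : ℝ => EuclideanSpace.single 0 s) '' Ioo 0 r) := by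
                rw [h1_image, Real.volume_Ioo, sub_zero]
            _ ≤ _ := measure_mono hsub
        calc (1 / 4 : ℝ≥0∞)
            = ENNReal.ofReal r / (4 * ENNReal.ofReal r) := (quarter_div hr).symm
          _ ≤ _ := by
              rw [axesMeasure_ball hr]
              exact ENNReal.div_le_div_right hlow _
      · intro ht1
        have hzero : ∀ r : ℝ,
            axesMeasure (ball (0:E2) r ∩ {y | (uAxes y : EReal) < t}) = 0 := by
          intro r
          rw [axesMeasure, Measure.restrict_apply' coordAxes_meas]
          refine measure_mono_null (t := {(0 : E2)}) ?_ ?_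
          · rintro p ⟨⟨_, hp⟩, hax⟩
            rw [mem_setOf_eq] at hp
            have : uAxes p < 1 := by
              have h1 : ((uAxes p : ℝ) : EReal) < ((1:ℝ) : EReal) := by
                refine lt_of_lt_of_le hp (le_trans ht1 ?_)
                norm_cast
              exact_mod_cast h1
            rw [uAxes_lt_one hax this]
            exact mem_singleton _
          · have : ({(0 : E2)} : Set E2)
                = (fun s : ℝ => EuclideanSpace.single 0 s) '' {0} := by
              rw [Set.image_singleton]
              congr 1
              ext j; simp [EuclideanSpace.single_apply]
            rw [this, h1_image, Real.volume_singleton]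
        have : (fun r : ℝ =>
            axesMeasure (ball (0:E2) r ∩ {y | (uAxes y : EReal) < t}) /
              axesMeasure (ball (0:E2) r)) = fun _ => 0 := by
          funext r; rw [hzero r, ENNReal.zero_div]
        rw [this]
        exact tendsto_const_nhds
    simp only [lowerApproxLimit]
    rw [hset, csSup_Iic]
  · -- upper approximate limit
    have hset : {t : EReal |
        Tendsto (fun r : ℝ =>
          axesMeasure (ball (0:E2) r ∩ {y | t < (uAxes y : EReal)}) /
            axesMeasure (ball (0:E2) r)) (𝓝[>] (0 : ℝ)) (𝓝 0)}
        = Ici (4 : EReal) := by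
      ext t
      simp only [mem_setOf_eq, mem_Ici]
      constructor
      · intro hT
        by_contra hlt
        rw [not_le] at hlt
        refine not_tendsto_of_quarter (fun r hr => ?_) hT
        rw [mem_Ioi] at hr
        have hsub : (fun s : ℝ => EuclideanSpace.single 1 s) '' Ioo (-r) 0
            ⊆ (ball (0:E2) r ∩ {y | t < (uAxes y : EReal)}) ∩ coordAxes := by
          rintro p ⟨s, ⟨hs1, hs2⟩, rfl⟩
          have hb : EuclideanSpace.single (1 : Fin 2) s ∈ ball (0:E2) r := by
            rw [mem_ball_zero_iff, norm_single', abs_lt]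
            exact ⟨hs1, by linarith⟩
          refine ⟨⟨hb, ?_⟩, Or.inl (by simp [EuclideanSpace.single_apply])⟩
          rw [mem_setOf_eq, uAxes_single1, if_neg (by linarith), if_pos hs2]
          calc t < (4 : EReal) := hlt
            _ = ((4:ℝ) : EReal) := by norm_cast
        have hlow : ENNReal.ofReal r
            ≤ axesMeasure (ball (0:E2) r ∩ {y | t < (uAxes y : EReal)}) := by
          rw [axesMeasure, Measure.restrict_apply' coordAxes_meas]
          calc ENNReal.ofReal r
              = Measure.hausdorffMeasure 1
                  ((fun s : ℝ => EuclideanSpace.single 1 s) '' Ioo (-r) 0) := by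
                rw [h1_image, Real.volume_Ioo, zero_sub, neg_neg]
            _ ≤ _ := measure_mono hsub
        calc (1 / 4 : ℝ≥0∞)
            = ENNReal.ofReal r / (4 * ENNReal.ofReal r) := (quarter_div hr).symm
          _ ≤ _ := by
              rw [axesMeasure_ball hr]
              exact ENNReal.div_le_div_right hlow _
      · intro ht4
        have hzero : ∀ r : ℝ,
            axesMeasure (ball (0:E2) r ∩ {y | t < (uAxes y : EReal)}) = 0 := by
          intro r
          rw [axesMeasure, Measure.restrict_apply' coordAxes_meas]
          have hempty : (ball (0:E2) r ∩ {y | t < (uAxes y : EReal)}) ∩ coordAxes = ∅ := by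
            rw [Set.eq_empty_iff_forall_notMem]
            rintro p ⟨⟨_, hp⟩, hax⟩
            rw [mem_setOf_eq] at hp
            have hle : ((uAxes p : ℝ) : EReal) ≤ ((4:ℝ) : EReal) := by
              exact_mod_cast uAxes_le_four hax
            have : t < t := lt_of_lt_of_le hp (le_trans hle (by
              calc ((4:ℝ) : EReal) = (4 : EReal) := by norm_cast
                _ ≤ t := ht4))
            exact lt_irrefl t this
          rw [hempty, measure_empty]
        have : (fun r : ℝ =>
            axesMeasure (ball (0:E2) r ∩ {y | t < (uAxes y : EReal)}) /
              axesMeasure (ball (0:E2) r)) = fun _ => 0 := by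
          funext r; rw [hzero r, ENNReal.zero_div]
        rw [this]
        exact tendsto_const_nhds
    simp only [upperApproxLimit]
    rw [hset, csInf_Ici]
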